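/- Let X be a real m×k matrix, A a real symmetric k×k matrix, and Ω a real antisymmetric m×m matrix such that Ω²X = 2XA. Define R = −XᵀΩX. Then R is antisymmetric and A commutes with R: A*R = R*A. -/

import Mathlib

/-! Transposing Ω²X = 2XA, and using that Ω² is symmetric and A is too, gives XᵀΩ² = 2AXᵀ.
Hence 2A·XᵀΩX = XᵀΩ²·ΩX = XᵀΩ·Ω²X = XᵀΩX·2A, since Ω commutes with Ω². -/

namespace Matrix

variable {m n α : Type*} [Fintype m] [CommRing α]

theorem transpose_transpose_mul_mul_of_transpose_eq_neg {Ω : Matrix m m α}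
    (hΩ : Ωᵀ = -Ω) (X : Matrix m n α) : (Xᵀ * Ω * X)ᵀ = -(Xᵀ * Ω * X) := by
  simp [transpose_mul, hΩ, Matrix.mul_assoc]

theorem isSymm_sq_of_transpose_eq_neg [DecidableEq m] {Ω : Matrix m m α} (hΩ : Ωᵀ = -Ω) :
    (Ω ^ 2).IsSymm := by
  simp [IsSymm, transpose_pow, hΩ]

theorem transpose_mul_transpose_mul_mul_comm_of_sq_mul_eq [DecidableEq m] [Fintype n]
    {Ω : Matrix m m α} {X : Matrix m n α} {B : Matrix n n α}
    (hΩ : (Ω ^ 2).IsSymm) (hB : Ω ^ 2 * X = X * B) :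
    Bᵀ * (Xᵀ * Ω * X) = (Xᵀ * Ω * X) * B := by
  have hBT : Xᵀ * Ω ^ 2 = Bᵀ * Xᵀ := by
    rw [← hΩ.eq, ← transpose_mul, hB, transpose_mul]
  calc Bᵀ * (Xᵀ * Ω * X) = Xᵀ * Ω ^ 2 * (Ω * X) := by
        simp only [hBT, Matrix.mul_assoc]
    _ = Xᵀ * Ω * (Ω ^ 2 * X) := by
        simp only [sq, Matrix.mul_assoc]
    _ = Xᵀ * Ω * X * B := by rw [hB]; simp only [Matrix.mul_assoc]

end Matrix

/-- The relative-equilibrium equation Ω²X = 2XA implies that R = −XᵀΩX is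
antisymmetric and commutes with A. -/
theorem winterConley_commutes_with_R {m k : ℕ}
    (X : Matrix (Fin m) (Fin k) ℝ) (A : Matrix (Fin k) (Fin k) ℝ)
    (Ω : Matrix (Fin m) (Fin m) ℝ)
    (hA : A.transpose = A) (hΩ : Ω.transpose = -Ω)
    (hre : Ω ^ 2 * X = (2 : ℝ) • (X * A)) :
    (-(X.transpose * Ω * X)).transpose = -(-(X.transpose * Ω * X)) ∧
      A * (-(X.transpose * Ω * X)) = (-(X.transpose * Ω * X)) * A := by
  refine ⟨by rw [Matrix.transpose_neg, Matrix.transpose_transpose_mul_mul_of_transpose_eq_neg hΩ],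
    ?_⟩
  have hcomm := Matrix.transpose_mul_transpose_mul_mul_comm_of_sq_mul_eq
    (Matrix.isSymm_sq_of_transpose_eq_neg hΩ) (hre.trans (Matrix.mul_smul X 2 A).symm)
  rw [Matrix.transpose_smul, hA, Matrix.smul_mul, Matrix.mul_smul] at hcomm
  rw [Matrix.mul_neg, Matrix.neg_mul, smul_right_injective _ two_ne_zero hcomm]
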